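/- Let A be a B(H,K)-valued frame for H with lower frame bound α, let B be a μ-perturbation of A with μ < √α, and let L ∈ B(H, ℓ²(I,K)) with L* T_A = 0. Then the dual of B with analysis operator T_B S_B^{-1} + P_{ker T_B*}(T_A S_A^{-1} + L) is a best approximation (in operator norm) of the dual T_A S_A^{-1} + L of A among all dual analysis operators of B, i.e., ‖(T_B S_B^{-1} + P_{ker T_B*}(T_A S_A^{-1} + L)) - (T_A S_A^{-1} + L)‖ ≤ ‖T - (T_A S_A^{-1} + L)‖ for every T of the form T_B S_B^{-1} + M with M ∈ B(H, ℓ²(I,K)), M* T_B = 0. -/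

import Mathlib

/-!
Every dual of `B` has the form `T = T_B S_B⁻¹ + M` with `ran M ⊆ W := ker T_B*`, while
`ran T_B ⊥ W`. Hence, with `D = T_A S_A⁻¹ + L` and `P = P_W`, `(1 - P)(T - D) = T_B S_B⁻¹ + P D - D`
for every such `T`, and `‖1 - P‖ ≤ 1`.
-/

open ContinuousLinearMap

noncomputable def proj {H : Type*} [NormedAddCommGroup H] [InnerProductSpace ℂ H]
    (W : Submodule ℂ H) [CompleteSpace W] : H →L[ℂ] H :=
  W.subtypeL.comp (W.orthogonalProjectionOnto)

theorem proj_eq_starProjection {H : Type*} [NormedAddCommGroup H] [InnerProductSpace ℂ H]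
    (W : Submodule ℂ H) [CompleteSpace W] : proj W = W.starProjection :=
  rfl

theorem Submodule.norm_add_starProjection_comp_sub_le {𝕜 E F : Type*} [RCLike 𝕜]
    [SeminormedAddCommGroup E] [NormedSpace 𝕜 E] [NormedAddCommGroup F] [InnerProductSpace 𝕜 F]
    (W : Submodule 𝕜 F) [W.HasOrthogonalProjection] {N M D : E →L[𝕜] F}
    (hN : W.starProjection ∘L N = 0) (hM : W.starProjection ∘L M = M) :
    ‖N + W.starProjection ∘L D - D‖ ≤ ‖N + M - D‖ := by
  have h : Wᗮ.starProjection ∘L (N + M - D) = N + W.starProjection ∘L D - D := by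
    rw [W.starProjection_orthogonal, sub_comp, id_comp, comp_sub, comp_add, hN, hM]
    abel
  calc ‖N + W.starProjection ∘L D - D‖ = ‖Wᗮ.starProjection ∘L (N + M - D)‖ := by rw [h]
    _ ≤ ‖Wᗮ.starProjection‖ * ‖N + M - D‖ := opNorm_comp_le _ _
    _ ≤ ‖N + M - D‖ := mul_le_of_le_one_left (norm_nonneg _) Wᗮ.starProjection_norm_le

section
variable {𝕜 E F G : Type*} [RCLike 𝕜]
  [NormedAddCommGroup E] [InnerProductSpace 𝕜 E] [CompleteSpace E]
  [NormedAddCommGroup F] [InnerProductSpace 𝕜 F] [CompleteSpace F]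
  [NormedAddCommGroup G] [InnerProductSpace 𝕜 G] [CompleteSpace G]

theorem ContinuousLinearMap.starProjection_ker_adjoint_comp_self (T : E →L[𝕜] F) :
    (LinearMap.ker (adjoint T : F →ₗ[𝕜] E)).starProjection ∘L T = 0 := by
  ext x
  rw [comp_apply, zero_apply, Submodule.starProjection_apply_eq_zero_iff, ← T.orthogonal_range]
  exact Submodule.le_orthogonal_orthogonal _ ⟨x, rfl⟩

theorem ContinuousLinearMap.starProjection_ker_adjoint_comp_of_adjoint_comp_eq_zero
    {T : E →L[𝕜] F} {M : G →L[𝕜] F} (h : (adjoint M) ∘L T = 0) :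
    (LinearMap.ker (adjoint T : F →ₗ[𝕜] E)).starProjection ∘L M = M := by
  have hTM : (adjoint T) ∘L M = 0 := by simpa [adjoint_comp] using congrArg adjoint h
  ext x
  rw [comp_apply, Submodule.starProjection_eq_self_iff, LinearMap.mem_ker, coe_coe, ← comp_apply,
    hTM, zero_apply]
end

theorem best_approximation_dual_general {H K : Type*}
    [NormedAddCommGroup H] [InnerProductSpace ℂ H] [CompleteSpace H]
    [NormedAddCommGroup K] [InnerProductSpace ℂ K] [CompleteSpace K]
    {I : Type*} (TA TB : H →L[ℂ] lp (fun _ : I => K) 2)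
    (L : H →L[ℂ] lp (fun _ : I => K) 2) :
    ∀ M : H →L[ℂ] lp (fun _ : I => K) 2, (adjoint M).comp TB = 0 →
      ‖(TB.comp (Ring.inverse ((adjoint TB).comp TB)) +
            (_root_.proj (LinearMap.ker (adjoint TB : lp (fun _ : I => K) 2 →ₗ[ℂ] H))).comp
              (TA.comp (Ring.inverse ((adjoint TA).comp TA)) + L)) -
          (TA.comp (Ring.inverse ((adjoint TA).comp TA)) + L)‖ ≤
      ‖(TB.comp (Ring.inverse ((adjoint TB).comp TB)) + M) -
          (TA.comp (Ring.inverse ((adjoint TA).comp TA)) + L)‖ := by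
  intro M hM
  rw [proj_eq_starProjection]
  refine Submodule.norm_add_starProjection_comp_sub_le _ ?_
    (starProjection_ker_adjoint_comp_of_adjoint_comp_eq_zero hM)
  rw [← comp_assoc, starProjection_ker_adjoint_comp_self, zero_comp]

/-- Let `A` be an operator-valued frame for `H` with lower frame bound `α`, `B` a
`μ`-perturbation of `A` with `μ < √α`, and `L` with `L* T_A = 0`. Then the dual of `B`
with analysis operator `T_B S_B⁻¹ + P_{ker T_B*}(T_A S_A⁻¹ + L)` is a best approximation
of the dual `T_A S_A⁻¹ + L` of `A` among all duals `T_B S_B⁻¹ + M` (`M* T_B = 0`) of `B`. -/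
theorem best_approximation_dual {H K : Type*}
    [NormedAddCommGroup H] [InnerProductSpace ℂ H] [CompleteSpace H]
    [NormedAddCommGroup K] [InnerProductSpace ℂ K] [CompleteSpace K]
    {I : Type*} [Countable I] (TA TB : H →L[ℂ] lp (fun _ : I => K) 2)
    (α : ℝ) (hα : 0 < α)
    (hframe : ∀ x : H, α * ‖x‖ ^ 2 ≤ ‖TA x‖ ^ 2)
    (μ : ℝ) (hμ : ‖TA - TB‖ ≤ μ) (hμα : μ < Real.sqrt α)
    (L : H →L[ℂ] lp (fun _ : I => K) 2) (hL : (adjoint L).comp TA = 0) :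
    ∀ M : H →L[ℂ] lp (fun _ : I => K) 2, (adjoint M).comp TB = 0 →
      ‖(TB.comp (Ring.inverse ((adjoint TB).comp TB)) +
            (_root_.proj (LinearMap.ker (adjoint TB : lp (fun _ : I => K) 2 →ₗ[ℂ] H))).comp
              (TA.comp (Ring.inverse ((adjoint TA).comp TA)) + L)) -
          (TA.comp (Ring.inverse ((adjoint TA).comp TA)) + L)‖ ≤
      ‖(TB.comp (Ring.inverse ((adjoint TB).comp TB)) + M) -
          (TA.comp (Ring.inverse ((adjoint TA).comp TA)) + L)‖ :=
  best_approximation_dual_general TA TB L
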